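/- arXiv:2508.10765 — 7 statements merged into one kernel-verified Lean document; each statement's English description precedes it below -/
import Mathlib

section
/- Assume the weight matrix ω is symmetric. For every x ∈ ℝ^N, the matrix with entries √(F'(x_i))·J(x)_{ij}/√(F'(x_j)) is a symmetric matrix; that is, the Jacobian J(x) is conjugate, via the positive diagonal matrix D^{1/2} with D = diag(F'(x_1),…,F'(x_N)), to the symmetric matrix −I + g·D^{1/2}·C·D^{1/2}, where C_ij = F(ω_ij). -/
/-
Writing `d = diag(F'(x))` and `C = (F(ω_ij))`, the Jacobian is `J = -I + g • C * d`. Conjugating by the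
positive diagonal matrix `d^{1/2}` fixes `-I` and turns `C * d` into `d^{1/2} * C * d^{1/2}`, which
is symmetric as soon as `C` is, i.e. as soon as `ω` is.
-/

open Real

noncomputable def F (lam s : ℝ) : ℝ := (2 / Real.pi) * Real.arctan (lam * Real.pi * s / 2)

noncomputable def Fd (lam s : ℝ) : ℝ := lam / (1 + (lam * Real.pi * s / 2) ^ 2)

noncomputable def J (N : ℕ) (lam g : ℝ) (ω : Fin N → Fin N → ℝ) (x : Fin N → ℝ) :
    Matrix (Fin N) (Fin N) ℝ :=
  Matrix.of fun i j => -(if i = j then (1 : ℝ) else 0) + g * F lam (ω i j) * Fd lam (x j)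

lemma Fd_pos {lam : ℝ} (hlam : 0 < lam) (s : ℝ) : 0 < Fd lam s := by
  unfold Fd
  positivity

section DiagonalScaling

variable {ι : Type*} [DecidableEq ι]

lemma diagonal_scaling_neg_one_add_mul_sq {s : ι → ℝ} (hs : ∀ i, s i ≠ 0) (g : ℝ)
    (C : ι → ι → ℝ) :
    (Matrix.of fun i j => s i * (-(if i = j then (1 : ℝ) else 0) + g * C i j * s j ^ 2) / s j) =
      Matrix.of fun i j => -(if i = j then (1 : ℝ) else 0) + g * (s i * C i j * s j) := by
  ext i j
  simp only [Matrix.of_apply]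
  rcases eq_or_ne i j with rfl | hij
  · field_simp [hs i]
  · simp only [if_neg hij]
    field_simp [hs j]
    ring

lemma isSymm_neg_one_add_mul_scaled {C : ι → ι → ℝ} (hC : ∀ i j, C i j = C j i) (g : ℝ)
    (s : ι → ℝ) :
    (Matrix.of fun i j => -(if i = j then (1 : ℝ) else 0) + g * (s i * C i j * s j)).IsSymm := by
  ext i j
  simp only [Matrix.transpose_apply, Matrix.of_apply, hC i j, eq_comm (a := i)]
  ring

end DiagonalScaling

theorem hopfield_jacobian_symmetrizable_general (N : ℕ) (lam g : ℝ)
    (hlam : 0 < lam) (ω : Fin N → Fin N → ℝ)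
    (hsym : ∀ i j, ω i j = ω j i) :
    ∀ x : Fin N → ℝ,
      (Matrix.of fun i j =>
          Real.sqrt (Fd lam (x i)) * J N lam g ω x i j / Real.sqrt (Fd lam (x j))).IsSymm ∧
      (Matrix.of fun i j =>
          Real.sqrt (Fd lam (x i)) * J N lam g ω x i j / Real.sqrt (Fd lam (x j))) =
        Matrix.of fun i j => -(if i = j then (1 : ℝ) else 0) +
          g * (Real.sqrt (Fd lam (x i)) * F lam (ω i j) * Real.sqrt (Fd lam (x j))) := by
  intro x
  have hsqrt_ne : ∀ i, √(Fd lam (x i)) ≠ 0 := fun i => (Real.sqrt_pos.2 (Fd_pos hlam _)).ne'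
  have hJ : J N lam g ω x = Matrix.of fun i j =>
      -(if i = j then (1 : ℝ) else 0) + g * F lam (ω i j) * √(Fd lam (x j)) ^ 2 := by
    ext i j
    simp only [J, Matrix.of_apply, Real.sq_sqrt (Fd_pos hlam _).le]
  simp only [hJ, Matrix.of_apply]
  rw [diagonal_scaling_neg_one_add_mul_sq hsqrt_ne]
  exact ⟨isSymm_neg_one_add_mul_scaled (fun i j => by rw [hsym]) g _, rfl⟩

/-- For symmetric ω, the matrix √(F'(x_i))·J(x)_{ij}/√(F'(x_j)) is symmetric,
and equals −I + g·D^{1/2}·C·D^{1/2} with C_{ij} = F(ω_{ij}), D = diag(F'(x_i)). -/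
theorem hopfield_jacobian_symmetrizable (N : ℕ) (hN : 1 ≤ N) (lam g : ℝ)
    (hlam : 0 < lam) (hg : 0 < g) (ω : Fin N → Fin N → ℝ)
    (hsym : ∀ i j, ω i j = ω j i) :
    ∀ x : Fin N → ℝ,
      (Matrix.of fun i j =>
          Real.sqrt (Fd lam (x i)) * J N lam g ω x i j / Real.sqrt (Fd lam (x j))).IsSymm ∧
      (Matrix.of fun i j =>
          Real.sqrt (Fd lam (x i)) * J N lam g ω x i j / Real.sqrt (Fd lam (x j))) =
        Matrix.of fun i j => -(if i = j then (1 : ℝ) else 0) +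
          g * (Real.sqrt (Fd lam (x i)) * F lam (ω i j) * Real.sqrt (Fd lam (x j))) :=
  hopfield_jacobian_symmetrizable_general N lam g hlam ω hsym
end

section
/- Assume the weight matrix ω is symmetric. Then for every x ∈ ℝ^N, all complex eigenvalues of the Jacobian matrix J(x) (i.e., all complex roots of its characteristic polynomial) are real. -/
open Real

open Polynomial Matrix in
lemma det_smul_one_sub_eq_zero_of_isRoot_charpoly {n : Type*} [Fintype n] [DecidableEq n]
    {M : Matrix n n ℂ} {z : ℂ} (h : M.charpoly.IsRoot z) :
    (z • (1 : Matrix n n ℂ) - M).det = 0 := by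
  have h1 := RingHom.map_det (Polynomial.evalRingHom z) (charmatrix M)
  rw [RingHom.mapMatrix_apply] at h1
  have hmap : (charmatrix M).map (Polynomial.evalRingHom z)
      = z • (1 : Matrix n n ℂ) - M := by
    ext i j
    by_cases hij : i = j <;>
      simp [hij, charmatrix_apply_eq, charmatrix_apply_ne, Matrix.map_apply,
        Matrix.sub_apply, Matrix.smul_apply, Matrix.one_apply]
  have h2 : Polynomial.eval z M.charpoly = (z • (1 : Matrix n n ℂ) - M).det := by
    rw [← hmap]
    simpa [Matrix.charpoly] using h1
  rw [← h2]
  exact h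

open Matrix in
open scoped ComplexOrder in
lemma im_eq_zero_of_hermitian_of_det_eq_zero {n : Type*} [Fintype n] [DecidableEq n]
    {K : Matrix n n ℂ} (hK : K.IsHermitian) {z : ℂ}
    (hdet : (z • (1 : Matrix n n ℂ) - K).det = 0) : z.im = 0 := by
  obtain ⟨v, hv, hKv⟩ := (Matrix.exists_mulVec_eq_zero_iff).2 hdet
  have hKv' : K *ᵥ v = z • v := by
    have h1 : (z • (1 : Matrix n n ℂ) - K) *ᵥ v = z • v - K *ᵥ v := by
      rw [Matrix.sub_mulVec, Matrix.smul_mulVec, Matrix.one_mulVec]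
    rw [h1] at hKv
    exact (sub_eq_zero.mp hKv).symm
  set s : ℂ := dotProduct (star v) v with hs_def
  have hs_ne : s ≠ 0 := fun h => hv (dotProduct_star_self_eq_zero.mp h)
  have hs_star : star s = s := (Matrix.star_dotProduct v v).symm
  set c : ℂ := dotProduct (star v) (K *ᵥ v) with hc_def
  have hc : c = z * s := by
    rw [hc_def, hKv', dotProduct_smul, smul_eq_mul, hs_def]
  have hc_star : star c = c := by
    calc star c = star (star v ⬝ᵥ (K *ᵥ v)) := rfl
      _ = star (star (star (K *ᵥ v) ⬝ᵥ v)) := by rw [← Matrix.star_dotProduct v (K *ᵥ v)]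
      _ = star (K *ᵥ v) ⬝ᵥ v := star_star _
      _ = (star v ᵥ* Kᴴ) ⬝ᵥ v := by rw [Matrix.star_mulVec]
      _ = star v ⬝ᵥ (Kᴴ *ᵥ v) := (Matrix.dotProduct_mulVec _ _ _).symm
      _ = c := by rw [hK.eq]
  have : (starRingEnd ℂ) z = z := by
    have h2 : (starRingEnd ℂ) z * s = z * s := by
      calc (starRingEnd ℂ) z * s = star z * star s := by rw [hs_star]; rfl
        _ = star (z * s) := by rw [star_mul']
        _ = star c := by rw [hc]
        _ = c := hc_star
        _ = z * s := hc
    exact mul_right_cancel₀ hs_ne h2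
  exact Complex.conj_eq_iff_im.mp this

set_option maxHeartbeats 1000000 in
/-- For symmetric ω, all complex eigenvalues of the Jacobian J(x)
(roots of its characteristic polynomial) are real. -/
theorem hopfield_jacobian_real_eigenvalues (N : ℕ) (hN : 1 ≤ N) (lam g : ℝ)
    (hlam : 0 < lam) (hg : 0 < g) (ω : Fin N → Fin N → ℝ)
    (hsym : ∀ i j, ω i j = ω j i) :
    ∀ (x : Fin N → ℝ) (z : ℂ),
      (((J N lam g ω x).map (Complex.ofReal)).charpoly).IsRoot z → z.im = 0 := by
  intro x z hz
  classical
  set d : Fin N → ℝ := fun j => Fd lam (x j) with hd_def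
  have hd : ∀ j, 0 < d j := fun j => div_pos hlam (by positivity)
  set e : Fin N → ℂ := fun j => (Real.sqrt (d j) : ℂ) with he_def
  have he : ∀ j, e j ≠ 0 := by
    intro j
    simpa [he_def] using (Real.sqrt_ne_zero (hd j).le).mpr (hd j).ne'
  have hee : ∀ j, e j * e j = (d j : ℂ) := by
    intro j
    rw [he_def, ← Complex.ofReal_mul, Real.mul_self_sqrt (hd j).le]
  set M : Matrix (Fin N) (Fin N) ℂ := (J N lam g ω x).map Complex.ofReal with hM_def
  set P : Matrix (Fin N) (Fin N) ℂ := Matrix.diagonal e with hP_def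
  set Q : Matrix (Fin N) (Fin N) ℂ := Matrix.diagonal (fun j => (e j)⁻¹) with hQ_def
  have hPQ : P * Q = 1 := by
    rw [hP_def, hQ_def, Matrix.diagonal_mul_diagonal,
      show (fun j => e j * (e j)⁻¹) = fun _ => (1 : ℂ) from
        funext fun j => mul_inv_cancel₀ (he j), Matrix.diagonal_one]
  set K : Matrix (Fin N) (Fin N) ℂ := P * M * Q with hK_def
  -- the key real symmetry
  have hkey : ∀ i j, (d i : ℂ) * M i j = (d j : ℂ) * M j i := by
    intro i j
    have hreal : d i * (J N lam g ω x i j) = d j * (J N lam g ω x j i) := by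
      by_cases hij : i = j
      · subst hij; rfl
      · have hij' : ¬ j = i := fun h => hij h.symm
        simp only [J, Matrix.of_apply, if_neg hij, if_neg hij', hsym i j]
        ring
    calc (d i : ℂ) * M i j = ((d i * J N lam g ω x i j : ℝ) : ℂ) := by
          simp [hM_def, Matrix.map_apply]
      _ = ((d j * J N lam g ω x j i : ℝ) : ℂ) := by rw [hreal]
      _ = (d j : ℂ) * M j i := by simp [hM_def, Matrix.map_apply]
  have hKapply : ∀ i j, K i j = e i * M i j * (e j)⁻¹ := by
    intro i j
    rw [hK_def, hP_def, hQ_def, Matrix.mul_diagonal, Matrix.diagonal_mul]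
  -- K is Hermitian
  have hherm : K.IsHermitian := by
    have hconjM : ∀ i j, star (M i j) = M i j := by
      intro i j; simp [hM_def, Matrix.map_apply, Complex.conj_ofReal]
    have hconje : ∀ j, star (e j) = e j := by
      intro j; simp [he_def, Complex.conj_ofReal]
    rw [Matrix.IsHermitian]
    ext i j
    rw [Matrix.conjTranspose_apply, hKapply i j, hKapply j i]
    rw [star_mul', star_mul', star_inv₀, hconjM, hconje, hconje]
    -- goal : (e i)⁻¹ * (M j i * e j) = e i * M i j * (e j)⁻¹  (roughly)
    apply mul_right_cancel₀ (mul_ne_zero (he i) (he j))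
    field_simp
    rw [div_eq_div_iff (he i) (he j)]
    linear_combination (e i * e j * M j i) * hee j - (e i * e j * M i j) * hee i -
      (e i * e j) * hkey i j
  -- determinant of z•1 - K vanishes
  have hdetM : (z • (1 : Matrix (Fin N) (Fin N) ℂ) - M).det = 0 :=
    det_smul_one_sub_eq_zero_of_isRoot_charpoly hz
  have hconj : z • (1 : Matrix (Fin N) (Fin N) ℂ) - K
      = P * (z • (1 : Matrix (Fin N) (Fin N) ℂ) - M) * Q := by
    rw [Matrix.mul_sub, Matrix.sub_mul, hK_def]
    congr 1
    rw [Matrix.mul_smul, Matrix.mul_one, Matrix.smul_mul, hPQ]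
  have hdetK : (z • (1 : Matrix (Fin N) (Fin N) ℂ) - K).det = 0 := by
    rw [hconj, Matrix.det_mul, Matrix.det_mul]
    have : P.det * Q.det = 1 := by rw [← Matrix.det_mul, hPQ, Matrix.det_one]
    calc P.det * (z • (1 : Matrix (Fin N) (Fin N) ℂ) - M).det * Q.det
        = P.det * Q.det * (z • (1 : Matrix (Fin N) (Fin N) ℂ) - M).det := by ring
      _ = 0 := by rw [this, one_mul, hdetM]
  exact im_eq_zero_of_hermitian_of_det_eq_zero hherm hdetK
end

section
/- Let x : [0,∞) → ℝ^N be a solution of the autonomous Hopfield network with ω_ii = 0 for all i. Then for every t ≥ 0 and every i, |x_i(t)| ≤ e^{−t}·|x_i(0)| + (1 − e^{−t})·g·(N−1). In particular, the box {x : |x_i| ≤ g·(N−1) for all i} is forward invariant and absorbs all trajectories. -/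
open Real

noncomputable def u (N : ℕ) (lam g : ℝ) (ω : Fin N → Fin N → ℝ) (x : Fin N → ℝ) (i : Fin N) : ℝ :=
  -x i + g * ∑ j, F lam (ω i j) * F lam (x j)

lemma F_abs_le_one (lam s : ℝ) : |F lam s| ≤ 1 := by
  unfold F
  rw [abs_mul]
  have hpi := Real.pi_pos
  have h1 : |Real.arctan (lam * Real.pi * s / 2)| ≤ Real.pi / 2 := by
    rw [abs_le]
    exact ⟨(Real.neg_pi_div_two_lt_arctan _).le, (Real.arctan_lt_pi_div_two _).le⟩
  have h2 : |2 / Real.pi| = 2 / Real.pi := abs_of_pos (by positivity)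
  rw [h2]
  calc 2 / Real.pi * |Real.arctan (lam * Real.pi * s / 2)|
      ≤ 2 / Real.pi * (Real.pi / 2) := by
        apply mul_le_mul_of_nonneg_left h1 (by positivity)
    _ = 1 := by field_simp

lemma F_zero (lam : ℝ) : F lam 0 = 0 := by simp [F]

lemma sum_bound (N : ℕ) (hN : 2 ≤ N) (lam g : ℝ) (hg : 0 < g)
    (ω : Fin N → Fin N → ℝ) (hdiag : ∀ i, ω i i = 0) (i : Fin N) (v : Fin N → ℝ) :
    |g * ∑ j, F lam (ω i j) * F lam (v j)| ≤ g * ((N : ℝ) - 1) := by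
  rw [abs_mul, abs_of_pos hg]
  apply mul_le_mul_of_nonneg_left _ hg.le
  calc |∑ j, F lam (ω i j) * F lam (v j)|
      ≤ ∑ j, |F lam (ω i j) * F lam (v j)| := Finset.abs_sum_le_sum_abs _ _
    _ ≤ ∑ j : Fin N, (if j = i then (0:ℝ) else 1) := by
        apply Finset.sum_le_sum
        intro j _
        by_cases hji : j = i
        · simp [hji, hdiag, F_zero]
        · simp only [hji, if_false, abs_mul]
          calc |F lam (ω i j)| * |F lam (v j)| ≤ 1 * 1 :=
            mul_le_mul (F_abs_le_one _ _) (F_abs_le_one _ _) (abs_nonneg _) zero_le_one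
          _ = 1 := one_mul 1
    _ = (N : ℝ) - 1 := by
        have heq : ∀ j : Fin N, (if j = i then (0:ℝ) else 1) = 1 - (if j = i then 1 else 0) := by
          intro j; split <;> ring
        simp only [heq, Finset.sum_sub_distrib, Finset.sum_const, Finset.card_univ,
          Fintype.card_fin, nsmul_eq_mul, mul_one, Finset.sum_ite_eq', Finset.mem_univ, if_true]

/-- Along any solution of the autonomous network with zero-diagonal weights,
|x_i(t)| ≤ e^{−t}|x_i(0)| + (1 − e^{−t})·g·(N−1) for all t ≥ 0; the box
{|x_i| ≤ g(N−1)} is forward invariant and absorbing. -/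
theorem hopfield_solutions_absorbed_in_box (N : ℕ) (hN : 2 ≤ N) (lam g : ℝ)
    (hlam : 0 < lam) (hg : 0 < g) (ω : Fin N → Fin N → ℝ)
    (hdiag : ∀ i, ω i i = 0)
    (x : ℝ → Fin N → ℝ)
    (hsol : ∀ t ≥ (0 : ℝ), ∀ i, HasDerivAt (fun s => x s i) (u N lam g ω (x t) i) t) :
    ∀ t ≥ (0 : ℝ), ∀ i,
      |x t i| ≤ Real.exp (-t) * |x 0 i| + (1 - Real.exp (-t)) * (g * ((N : ℝ) - 1)) := by
  intro t ht i
  set C : ℝ := g * ((N : ℝ) - 1) with hCdef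
  have hNR : (2:ℝ) ≤ (N:ℝ) := by exact_mod_cast hN
  have hC0 : 0 ≤ C := mul_nonneg hg.le (by linarith)
  set h : ℝ → ℝ := fun s => g * ∑ j, F lam (ω i j) * F lam (x s j) with hhdef
  have hbound : ∀ s, |h s| ≤ C := fun s => sum_bound N hN lam g hg ω hdiag i (x s)
  -- derivative of f s = exp s * x s i
  have hf : ∀ s ≥ (0:ℝ), HasDerivAt (fun r => Real.exp r * x r i)
      (Real.exp s * h s) s := by
    intro s hs
    have h1 := (Real.hasDerivAt_exp s).mul (hsol s hs i)
    have : Real.exp s * x s i + Real.exp s * u N lam g ω (x s) i = Real.exp s * h s := by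
      simp only [u, hhdef]; ring
    rw [this] at h1
    exact h1
  -- upper function w s = exp s * x s i - C * (exp s - 1) is antitone on Ici 0
  have hw : ∀ s ≥ (0:ℝ), HasDerivAt (fun r => Real.exp r * x r i - C * (Real.exp r - 1))
      (Real.exp s * h s - C * Real.exp s) s := by
    intro s hs
    exact (hf s hs).sub ((((Real.hasDerivAt_exp s).sub_const 1)).const_mul C)
  have hv : ∀ s ≥ (0:ℝ), HasDerivAt (fun r => Real.exp r * x r i + C * (Real.exp r - 1))
      (Real.exp s * h s + C * Real.exp s) s := by
    intro s hs
    exact (hf s hs).add ((((Real.hasDerivAt_exp s).sub_const 1)).const_mul C)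
  have hwmono : AntitoneOn (fun r => Real.exp r * x r i - C * (Real.exp r - 1)) (Set.Ici 0) := by
    apply antitoneOn_of_deriv_nonpos (convex_Ici 0)
    · intro s hs
      exact (hw s hs).continuousAt.continuousWithinAt
    · intro s hs
      rw [interior_Ici] at hs
      exact (hw s (le_of_lt hs)).differentiableAt.differentiableWithinAt
    · intro s hs
      rw [interior_Ici] at hs
      rw [(hw s (le_of_lt hs)).deriv]
      have := (hbound s)
      have h1 : h s ≤ C := (abs_le.mp this).2
      have h2 : (0:ℝ) < Real.exp s := Real.exp_pos s
      nlinarith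
  have hvmono : MonotoneOn (fun r => Real.exp r * x r i + C * (Real.exp r - 1)) (Set.Ici 0) := by
    apply monotoneOn_of_deriv_nonneg (convex_Ici 0)
    · intro s hs
      exact (hv s hs).continuousAt.continuousWithinAt
    · intro s hs
      rw [interior_Ici] at hs
      exact (hv s (le_of_lt hs)).differentiableAt.differentiableWithinAt
    · intro s hs
      rw [interior_Ici] at hs
      rw [(hv s (le_of_lt hs)).deriv]
      have := (hbound s)
      have h1 : -C ≤ h s := (abs_le.mp this).1
      have h2 : (0:ℝ) < Real.exp s := Real.exp_pos s
      nlinarith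
  have hup := hwmono (Set.self_mem_Ici) (Set.mem_Ici.mpr ht) ht
  have hlo := hvmono (Set.self_mem_Ici) (Set.mem_Ici.mpr ht) ht
  simp only [Real.exp_zero, one_mul, sub_self, mul_zero, sub_zero, add_zero] at hup hlo
  -- hup : exp t * x t i - C * (exp t - 1) ≤ x 0 i
  -- hlo : x 0 i ≤ exp t * x t i + C * (exp t - 1)
  have key : Real.exp t * |x t i| ≤ |x 0 i| + C * (Real.exp t - 1) := by
    have hE : (0:ℝ) < Real.exp t := Real.exp_pos t
    rcases abs_cases (x t i) with ⟨habs, _⟩ | ⟨habs, _⟩ <;> rw [habs] <;>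
      rcases abs_cases (x 0 i) with ⟨h0, _⟩ | ⟨h0, _⟩ <;> rw [h0] <;> nlinarith [abs_nonneg (x 0 i), neg_abs_le (x 0 i), le_abs_self (x 0 i)]
  have hmul : Real.exp (-t) * Real.exp t = 1 := by
    rw [← Real.exp_add]; simp
  have hkey2 := mul_le_mul_of_nonneg_left key (Real.exp_pos (-t)).le
  nlinarith [hkey2, hmul, abs_nonneg (x t i), abs_nonneg (x 0 i), Real.exp_pos (-t), Real.exp_pos t, hC0]
end

section
/- Let x : [0,∞) → ℝ^N be any continuous function and let ω_ij : [0,∞) → ℝ be differentiable and satisfy the Hebbian weight equation ω_ij'(t) = (1/B)·(−ω_ij(t) + F(x_i(t))·F(x_j(t))) for all t ≥ 0. If |ω_ij(0)| < 1, then |ω_ij(t)| < 1 for all t ≥ 0; that is, the open box |ω_ij| < 1 in weight space is forward invariant under Hebbian learning. -/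
open Real

/-
Multiplying by the integrating factor `exp (k t)`, the gap `a - w` of a solution of
`w' = k (c - w)` satisfies `(exp (k t) (a - w t))' = k exp (k t) (a - c t) ≥ 0` while `c ≤ a`,
so it stays positive once it starts positive. The forcing term `F(x_i) F(x_j)` of the Hebbian
equation lies in `[-1, 1]` because `|F| < 1`.
-/

theorem abs_F_lt_one (lam s : ℝ) : |F lam s| < 1 := by
  have hpi := Real.pi_pos
  have harctan : |arctan (lam * π * s / 2)| < π / 2 :=
    abs_lt.mpr ⟨neg_pi_div_two_lt_arctan _, arctan_lt_pi_div_two _⟩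
  calc |F lam s| = 2 / π * |arctan (lam * π * s / 2)| := by
        rw [F, abs_mul, abs_of_pos (by positivity : (0 : ℝ) < 2 / π)]
    _ < 2 / π * (π / 2) := by gcongr
    _ = 1 := by field_simp

theorem lt_of_hasDerivAt_relaxation {k a : ℝ} (hk : 0 ≤ k) {w c : ℝ → ℝ}
    (hc : ∀ t ≥ 0, c t ≤ a) (hw : ∀ t ≥ 0, HasDerivAt w (k * (-(w t) + c t)) t)
    (h0 : w 0 < a) : ∀ t ≥ 0, w t < a := by
  set g : ℝ → ℝ := fun t => exp (k * t) * (a - w t)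
  have hg : ∀ t ≥ 0, HasDerivAt g (k * exp (k * t) * (a - c t)) t := fun t ht => by
    have hexp : HasDerivAt (fun t => exp (k * t)) (exp (k * t) * k) t :=
      ((hasDerivAt_id t).const_mul k).exp.congr_deriv (by simp)
    exact (hexp.mul ((hw t ht).const_sub a)).congr_deriv (by ring)
  have hmono : MonotoneOn g (Set.Ici 0) := by
    refine monotoneOn_of_hasDerivWithinAt_nonneg (convex_Ici 0)
      (fun t ht => (hg t ht).continuousAt.continuousWithinAt)
      (fun t ht => (hg t (interior_subset ht)).hasDerivWithinAt) fun t ht => ?_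
    have := hc t (interior_subset ht)
    have : 0 ≤ a - c t := by linarith
    positivity
  intro t ht
  have hgt : 0 < exp (k * t) * (a - w t) :=
    calc 0 < g 0 := by simpa [g] using h0
      _ ≤ g t := hmono Set.self_mem_Ici ht ht
  linarith [pos_of_mul_pos_right hgt (exp_pos _).le]

theorem abs_lt_of_hasDerivAt_relaxation {k a : ℝ} (hk : 0 ≤ k) {w c : ℝ → ℝ}
    (hc : ∀ t ≥ 0, |c t| ≤ a) (hw : ∀ t ≥ 0, HasDerivAt w (k * (-(w t) + c t)) t)
    (h0 : |w 0| < a) : ∀ t ≥ 0, |w t| < a := by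
  have hupper := lt_of_hasDerivAt_relaxation hk (fun t ht => (abs_le.mp (hc t ht)).2) hw
    (abs_lt.mp h0).2
  have hlower := lt_of_hasDerivAt_relaxation (w := fun t => -w t) (c := fun t => -c t) hk
    (fun t ht => by linarith [(abs_le.mp (hc t ht)).1])
    (fun t ht => (hw t ht).neg.congr_deriv (by ring)) (by linarith [(abs_lt.mp h0).1])
  exact fun t ht => abs_lt.mpr ⟨by linarith [hlower t ht], hupper t ht⟩

theorem hebbian_weight_box_forward_invariant_general (N : ℕ) (lam B : ℝ)
    (hB : 0 < B)
    (x : ℝ → Fin N → ℝ)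
    (i j : Fin N) (w : ℝ → ℝ)
    (hw : ∀ t ≥ (0 : ℝ), HasDerivAt w ((1 / B) * (-(w t) + F lam (x t i) * F lam (x t j))) t)
    (h0 : |w 0| < 1) :
    ∀ t ≥ (0 : ℝ), |w t| < 1 := by
  have hforcing : ∀ t ≥ (0 : ℝ), |F lam (x t i) * F lam (x t j)| ≤ 1 := fun t _ => by
    rw [abs_mul]
    exact mul_le_one₀ (abs_F_lt_one _ _).le (abs_nonneg _) (abs_F_lt_one _ _).le
  exact abs_lt_of_hasDerivAt_relaxation (by positivity) hforcing hw h0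

/-- Under the Hebbian weight equation, the open box |ω_ij| < 1 in weight
space is forward invariant: if |ω_ij(0)| < 1 then |ω_ij(t)| < 1 for all t ≥ 0. -/
theorem hebbian_weight_box_forward_invariant (N : ℕ) (hN : 1 ≤ N) (lam B : ℝ)
    (hlam : 0 < lam) (hB : 0 < B)
    (x : ℝ → Fin N → ℝ) (hx : Continuous x)
    (i j : Fin N) (w : ℝ → ℝ)
    (hw : ∀ t ≥ (0 : ℝ), HasDerivAt w ((1 / B) * (-(w t) + F lam (x t i) * F lam (x t j))) t)
    (h0 : |w 0| < 1) :
    ∀ t ≥ (0 : ℝ), |w t| < 1 :=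
  hebbian_weight_box_forward_invariant_general N lam B hB x i j w hw h0
end

section
/- Assume the weight matrix ω is symmetric, and let x : ℝ → ℝ^N be a solution of the autonomous Hopfield network. Then the energy E is differentiable along the trajectory with (d/dt) E(x(t)) = −Σ_{i=1}^N F'(x_i(t))·(u_i(x(t)))² ≤ 0 for all t; in particular, the function t ↦ E(x(t)) is nonincreasing. -/
open Real

noncomputable def G (lam s : ℝ) : ℝ := (2 / (lam * Real.pi ^ 2)) * Real.log (1 + (lam * Real.pi * s / 2) ^ 2)

noncomputable def E (N : ℕ) (lam g : ℝ) (ω : Fin N → Fin N → ℝ) (x : Fin N → ℝ) : ℝ :=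
  ∑ i, G lam (x i) - (g / 2) * ∑ i, ∑ j, F lam (ω i j) * F lam (x i) * F lam (x j)

/-!
`E` is a Lyapunov function. Since `G' = s F'` and `ω` is symmetric, the gradient of `E`
is `∂E/∂x_i = F'(x_i) (x_i - g Σ_j F(ω_ij) F(x_j)) = -F'(x_i) u_i(x)`, so along a solution
`dE/dt = Σ_i ∂E/∂x_i · u_i = -Σ_i F'(x_i) u_i² ≤ 0` because `F' > 0`.
-/

open Finset

lemma Fd_nonneg {lam : ℝ} (hlam : 0 ≤ lam) (s : ℝ) : 0 ≤ Fd lam s := by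
  unfold Fd
  positivity

lemma hasDerivAt_mul_pi_mul_div_two (lam s : ℝ) :
    HasDerivAt (fun s : ℝ => lam * π * s / 2) (lam * π / 2) s := by
  simpa using ((hasDerivAt_id s).const_mul (lam * π)).div_const 2

lemma hasDerivAt_F (lam s : ℝ) : HasDerivAt (F lam) (Fd lam s) s := by
  have harctan := (hasDerivAt_arctan _).comp s (hasDerivAt_mul_pi_mul_div_two lam s)
  refine (harctan.const_mul (2 / π)).congr_deriv ?_
  have : 1 + (lam * π * s / 2) ^ 2 ≠ 0 := by positivity
  unfold Fd
  field_simp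

lemma hasDerivAt_G {lam : ℝ} (hlam : lam ≠ 0) (s : ℝ) :
    HasDerivAt (G lam) (s * Fd lam s) s := by
  have hpos : 0 < 1 + (lam * π * s / 2) ^ 2 := by positivity
  have hlog := (hasDerivAt_log hpos.ne').comp s
    (((hasDerivAt_mul_pi_mul_div_two lam s).pow 2).const_add 1)
  refine (hlog.const_mul (2 / (lam * π ^ 2))).congr_deriv ?_
  unfold Fd
  field_simp
  ring

lemma hasDerivAt_sum_sum_mul_mul {ι : Type*} [Fintype ι] {W : ι → ι → ℝ}
    (hW : ∀ i j, W i j = W j i)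
    {y : ℝ → ι → ℝ} {y' : ι → ℝ} {t : ℝ}
    (hy : ∀ i, HasDerivAt (fun s => y s i) (y' i) t) :
    HasDerivAt (fun s => ∑ i, ∑ j, W i j * y s i * y s j)
      (2 * ∑ i, y' i * ∑ j, W i j * y t j) t := by
  have hterm := HasDerivAt.fun_sum fun i (_ : i ∈ univ) =>
    HasDerivAt.fun_sum fun j (_ : j ∈ univ) => ((hy i).const_mul (W i j)).mul (hy j)
  refine hterm.congr_deriv ?_
  have hswap : ∑ i, ∑ j, W i j * y t i * y' j = ∑ i, ∑ j, W i j * y' i * y t j := by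
    rw [sum_comm]
    exact sum_congr rfl fun i _ => sum_congr rfl fun j _ => by rw [hW j i]; ring
  rw [sum_congr rfl fun i _ => sum_add_distrib, sum_add_distrib, hswap,
    ← two_mul]
  congr 1
  exact sum_congr rfl fun i _ => by rw [mul_sum]; exact sum_congr rfl fun j _ => by ring

lemma hasDerivAt_E_comp {N : ℕ} {lam : ℝ} (hlam : lam ≠ 0) (g : ℝ)
    {ω : Fin N → Fin N → ℝ} (hsym : ∀ i j, ω i j = ω j i) {x : ℝ → Fin N → ℝ} {v : Fin N → ℝ} {t : ℝ}
    (hx : ∀ i, HasDerivAt (fun s => x s i) (v i) t) :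
    HasDerivAt (fun s => E N lam g ω (x s))
      (-∑ i, Fd lam (x t i) * u N lam g ω (x t) i * v i) t := by
  have hG := HasDerivAt.fun_sum fun i (_ : i ∈ univ) =>
    (hasDerivAt_G hlam (x t i)).comp t (hx i)
  have hQ := hasDerivAt_sum_sum_mul_mul (fun i j => congrArg (F lam) (hsym i j))
    fun i => (hasDerivAt_F lam (x t i)).comp t (hx i)
  refine (hG.sub (hQ.const_mul (g / 2))).congr_deriv ?_
  rw [← mul_assoc, div_mul_cancel₀ g two_ne_zero, mul_sum, ← sum_sub_distrib,
    ← sum_neg_distrib]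
  exact sum_congr rfl fun i _ => by simp only [u, Function.comp_apply]; ring

theorem hopfield_energy_decreases_general (N : ℕ) (lam g : ℝ)
    (hlam : 0 < lam) (ω : Fin N → Fin N → ℝ)
    (hsym : ∀ i j, ω i j = ω j i)
    (x : ℝ → Fin N → ℝ)
    (hsol : ∀ (t : ℝ) (i : Fin N), HasDerivAt (fun s => x s i) (u N lam g ω (x t) i) t) :
    (∀ t : ℝ,
      HasDerivAt (fun s => E N lam g ω (x s))
        (-(∑ i, Fd lam (x t i) * (u N lam g ω (x t) i) ^ 2)) t ∧
      -(∑ i, Fd lam (x t i) * (u N lam g ω (x t) i) ^ 2) ≤ 0) ∧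
    Antitone (fun t => E N lam g ω (x t)) := by
  have hderiv t : HasDerivAt (fun s => E N lam g ω (x s))
      (-(∑ i, Fd lam (x t i) * (u N lam g ω (x t) i) ^ 2)) t := by
    simpa only [mul_assoc, sq] using hasDerivAt_E_comp hlam.ne' g hsym (hsol t)
  have hnonpos t : -(∑ i, Fd lam (x t i) * (u N lam g ω (x t) i) ^ 2) ≤ 0 :=
    neg_nonpos.2 <| sum_nonneg fun i _ => mul_nonneg (Fd_nonneg hlam.le _) (sq_nonneg _)
  exact ⟨fun t => ⟨hderiv t, hnonpos t⟩, antitone_of_hasDerivAt_nonpos hderiv hnonpos⟩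

/-- For symmetric ω, along any solution the energy is differentiable with
(d/dt)E(x(t)) = −Σ_i F'(x_i(t))·u_i(x(t))² ≤ 0; hence t ↦ E(x(t)) is nonincreasing. -/
theorem hopfield_energy_decreases (N : ℕ) (hN : 1 ≤ N) (lam g : ℝ)
    (hlam : 0 < lam) (hg : 0 < g) (ω : Fin N → Fin N → ℝ)
    (hsym : ∀ i j, ω i j = ω j i)
    (x : ℝ → Fin N → ℝ)
    (hsol : ∀ (t : ℝ) (i : Fin N), HasDerivAt (fun s => x s i) (u N lam g ω (x t) i) t) :
    (∀ t : ℝ,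
      HasDerivAt (fun s => E N lam g ω (x s))
        (-(∑ i, Fd lam (x t i) * (u N lam g ω (x t) i) ^ 2)) t ∧
      -(∑ i, Fd lam (x t i) * (u N lam g ω (x t) i) ^ 2) ≤ 0) ∧
    Antitone (fun t => E N lam g ω (x t)) :=
  hopfield_energy_decreases_general N lam g hlam ω hsym x hsol
end

section
/- Let K = max_{1≤i≤N} Σ_{j=1}^N |F(ω_ij)| and assume g·λ·K < 1. Then x = 0 is the unique equilibrium of the autonomous Hopfield network: u(0) = 0, and u(x*) = 0 implies x* = 0. -/
open Real

lemma arctan_nonneg' {x : ℝ} (h : 0 ≤ x) : 0 ≤ Real.arctan x := by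
  have := Real.arctan_strictMono.monotone h
  simpa [Real.arctan_zero] using this

lemma arctan_le_self' {x : ℝ} (h : 0 ≤ x) : Real.arctan x ≤ x := by
  have h1 : 0 ≤ Real.arctan x := arctan_nonneg' h
  have h2 := Real.le_tan h1 (Real.arctan_lt_pi_div_two x)
  rwa [Real.tan_arctan] at h2

lemma abs_arctan_le_abs (t : ℝ) : |Real.arctan t| ≤ |t| := by
  rcases le_or_gt 0 t with h | h
  · rw [abs_of_nonneg (arctan_nonneg' h), abs_of_nonneg h]
    exact arctan_le_self' h
  · have h' : 0 ≤ -t := by linarith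
    have h1 := arctan_le_self' h'
    rw [Real.arctan_neg] at h1
    have h2 : Real.arctan t ≤ 0 := by
      have := arctan_nonneg' h'
      rw [Real.arctan_neg] at this; linarith
    rw [abs_of_nonpos h2, abs_of_neg h]
    linarith

lemma F_abs_le (lam s : ℝ) (hlam : 0 < lam) : |F lam s| ≤ lam * |s| := by
  have hπ : (0:ℝ) < Real.pi := Real.pi_pos
  have h1 : |F lam s| = (2 / Real.pi) * |Real.arctan (lam * Real.pi * s / 2)| := by
    rw [F, abs_mul, abs_of_pos (by positivity)]
  rw [h1]
  calc (2 / Real.pi) * |Real.arctan (lam * Real.pi * s / 2)|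
      ≤ (2 / Real.pi) * |lam * Real.pi * s / 2| := by
        apply mul_le_mul_of_nonneg_left (abs_arctan_le_abs _) (by positivity)
    _ = lam * |s| := by
        rw [abs_div, abs_mul, abs_mul, abs_of_pos hlam, abs_of_pos hπ]
        field_simp
        ring

/-- If g·λ·K < 1 with K = max_i Σ_j |F(ω_ij)|, then x = 0 is the unique
equilibrium of the autonomous Hopfield network. -/
theorem hopfield_unique_equilibrium_origin (N : ℕ) (hN : 0 < N) (lam g : ℝ)
    (hlam : 0 < lam) (hg : 0 < g) (ω : Fin N → Fin N → ℝ) (K : ℝ)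
    (hK : K = Finset.univ.sup'
      (Finset.univ_nonempty_iff.mpr (Fin.pos_iff_nonempty.mp hN))
      (fun i => ∑ j, |F lam (ω i j)|))
    (hcontr : g * lam * K < 1) :
    (∀ i, u N lam g ω (fun _ => 0) i = 0) ∧
    (∀ x : Fin N → ℝ, (∀ i, u N lam g ω x i = 0) → x = fun _ => 0) := by
  have hne : (Finset.univ : Finset (Fin N)).Nonempty :=
    Finset.univ_nonempty_iff.mpr (Fin.pos_iff_nonempty.mp hN)
  constructor
  · intro i
    simp [u, F]
  · intro x hx
    set M := Finset.univ.sup' hne (fun i => |x i|) with hM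
    have hMle : ∀ i, |x i| ≤ M := fun i => Finset.le_sup' (fun i => |x i|) (Finset.mem_univ i)
    obtain ⟨i0, -, hi0⟩ := Finset.exists_mem_eq_sup' hne (fun i => |x i|)
    have hM0 : 0 ≤ M := le_trans (abs_nonneg _) (hMle i0)
    have hKi : ∀ i, (∑ j, |F lam (ω i j)|) ≤ K := by
      intro i; rw [hK]; exact Finset.le_sup' (fun i => ∑ j, |F lam (ω i j)|) (Finset.mem_univ i)
    have hxeq : x i0 = g * ∑ j, F lam (ω i0 j) * F lam (x j) := by
      have := hx i0; rw [u] at this; linarith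
    have hbound : |x i0| ≤ g * lam * K * M := by
      rw [hxeq, abs_mul, abs_of_pos hg]
      calc g * |∑ j, F lam (ω i0 j) * F lam (x j)|
          ≤ g * ∑ j, |F lam (ω i0 j)| * (lam * M) := by
            apply mul_le_mul_of_nonneg_left _ hg.le
            refine (Finset.abs_sum_le_sum_abs _ _).trans ?_
            apply Finset.sum_le_sum
            intro j _
            rw [abs_mul]
            apply mul_le_mul_of_nonneg_left _ (abs_nonneg _)
            calc |F lam (x j)| ≤ lam * |x j| := F_abs_le lam (x j) hlam
              _ ≤ lam * M := by apply mul_le_mul_of_nonneg_left (hMle j) hlam.le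
        _ = g * ((∑ j, |F lam (ω i0 j)|) * (lam * M)) := by rw [← Finset.sum_mul]
        _ ≤ g * (K * (lam * M)) := by
            apply mul_le_mul_of_nonneg_left _ hg.le
            apply mul_le_mul_of_nonneg_right (hKi i0) (by positivity)
        _ = g * lam * K * M := by ring
    have hMeq : M = |x i0| := hi0
    have hMzero : M = 0 := by
      by_contra h
      have hMpos : 0 < M := lt_of_le_of_ne hM0 (Ne.symm h)
      have : M ≤ g * lam * K * M := hMeq ▸ hbound
      nlinarith
    have : ∀ i, x i = 0 := by
      intro i
      have := hMle i
      rw [hMzero] at this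
      exact abs_eq_zero.mp (le_antisymm this (abs_nonneg _))
    funext i; exact this i
end

section
/- Fix a constant input vector I ∈ ℝ^N and A ∈ ℝ, and define V(x) = Σ_{i=1}^N [ (x_i − A·I_i)²/2 − g·x_i·Σ_{j=1}^N F(ω_ij)·sgn(x_j) ], where sgn is the sign function. Then at every point x ∈ ℝ^N with x_j ≠ 0 for all j, V is differentiable and ∂V/∂x_i (x) = −( −x_i + g·Σ_{j=1}^N F(ω_ij)·sgn(x_j) + A·I_i ) for every i; that is, on each open orthant the Hopfield network with step activation is the gradient system dx_i/dt = −∂V/∂x_i. -/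
open Real

noncomputable def V (N : ℕ) (lam g A : ℝ) (ω : Fin N → Fin N → ℝ) (I : Fin N → ℝ)
    (x : Fin N → ℝ) : ℝ :=
  ∑ i, ((x i - A * I i) ^ 2 / 2 - g * x i * ∑ j, F lam (ω i j) * Real.sign (x j))

/-!
On an open orthant every `sgn (x_j)` is locally constant, so near such a point `V` coincides
with the quadratic obtained by freezing the signs at their values at `x`. That quadratic is
smooth, and its partial derivative in `x_i` is the negated right-hand side of the network.
-/

open Filter Topology

theorem Real.eventually_sign_eq_of_ne_zero {x : ℝ} (hx : x ≠ 0) :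
    ∀ᶠ t in 𝓝 x, Real.sign t = Real.sign x := by
  rcases hx.lt_or_gt with hneg | hpos
  · filter_upwards [eventually_lt_nhds hneg] with t ht
    rw [Real.sign_of_neg ht, Real.sign_of_neg hneg]
  · filter_upwards [eventually_gt_nhds hpos] with t ht
    rw [Real.sign_of_pos ht, Real.sign_of_pos hpos]

theorem eventually_forall_sign_eq {ι : Type*} [Finite ι] {x : ι → ℝ} (hx : ∀ j, x j ≠ 0) :
    ∀ᶠ y in 𝓝 x, ∀ j, Real.sign (y j) = Real.sign (x j) :=
  eventually_all.2 fun j =>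
    (continuous_apply j).continuousAt.eventually (Real.eventually_sign_eq_of_ne_zero (hx j))

theorem hasDerivAt_sum_comp_update {ι 𝕜 E : Type*} [Fintype ι] [DecidableEq ι]
    [NontriviallyNormedField 𝕜] [NormedAddCommGroup E] [NormedSpace 𝕜 E]
    (φ : ι → 𝕜 → E) (x : ι → 𝕜) (i : ι) {d : E} (hφ : HasDerivAt (φ i) d (x i)) :
    HasDerivAt (fun s => ∑ k, φ k (Function.update x i s k)) d (x i) := by
  have hterm : ∀ k ∈ Finset.univ, HasDerivAt (fun s => φ k (Function.update x i s k))
      (if k = i then d else 0) (x i) := by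
    intro k _
    rcases eq_or_ne k i with rfl | hki
    · simpa using hφ
    · simpa [Function.update_of_ne hki, hki] using hasDerivAt_const (x i) (φ k (x k))
  simpa using HasDerivAt.fun_sum hterm

section FrozenPotential

variable {ι : Type*} [Fintype ι] (g A : ℝ) (I c : ι → ℝ)

/-- The potential `V` with the local field `∑ⱼ F(ωᵢⱼ) sgn(xⱼ)` replaced by a constant `cᵢ`. -/
noncomputable def frozenPotential (y : ι → ℝ) : ℝ :=
  ∑ k, ((y k - A * I k) ^ 2 / 2 - g * y k * c k)

theorem differentiable_frozenPotential : Differentiable ℝ (frozenPotential g A I c) := by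
  unfold frozenPotential
  fun_prop

theorem hasDerivAt_frozenPotential_update [DecidableEq ι] (x : ι → ℝ) (i : ι) :
    HasDerivAt (fun s => frozenPotential g A I c (Function.update x i s))
      (x i - A * I i - g * c i) (x i) := by
  refine hasDerivAt_sum_comp_update (fun k t => (t - A * I k) ^ 2 / 2 - g * t * c k) x i ?_
  have hsq : HasDerivAt (fun t => (t - A * I i) ^ 2 / 2) (x i - A * I i) (x i) := by
    refine ((((hasDerivAt_id' (x i)).sub_const (A * I i)).fun_pow 2).div_const 2).congr_deriv ?_
    ring
  have hlin : HasDerivAt (fun t => g * t * c i) (g * c i) (x i) := by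
    simpa using ((hasDerivAt_id' (x i)).const_mul g).mul_const (c i)
  exact hsq.sub hlin

end FrozenPotential

theorem V_eventuallyEq_frozenPotential (N : ℕ) (lam g A : ℝ) (ω : Fin N → Fin N → ℝ)
    (I : Fin N → ℝ) {x : Fin N → ℝ} (hx : ∀ j, x j ≠ 0) :
    V N lam g A ω I =ᶠ[𝓝 x]
      frozenPotential g A I (fun k => ∑ j, F lam (ω k j) * Real.sign (x j)) := by
  filter_upwards [eventually_forall_sign_eq hx] with y hy
  simp only [V, frozenPotential, hy]

theorem hopfield_step_activation_gradient_system_general (N : ℕ) (lam g A : ℝ)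
    (ω : Fin N → Fin N → ℝ) (I : Fin N → ℝ) :
    ∀ x : Fin N → ℝ, (∀ j, x j ≠ 0) →
      DifferentiableAt ℝ (V N lam g A ω I) x ∧
      ∀ i, HasDerivAt (fun s => V N lam g A ω I (Function.update x i s))
        (-(-x i + g * ∑ j, F lam (ω i j) * Real.sign (x j) + A * I i)) (x i) := by
  intro x hx
  have hV := V_eventuallyEq_frozenPotential N lam g A ω I hx
  refine ⟨hV.differentiableAt_iff.2 (differentiable_frozenPotential _ _ _ _ x), fun i => ?_⟩
  have hupdate : Tendsto (Function.update x i) (𝓝 (x i)) (𝓝 x) := by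
    simpa using ((continuous_const (y := x)).update i continuous_id).tendsto (x i)
  refine ((hasDerivAt_frozenPotential_update g A I _ x i).congr_of_eventuallyEq
    (hV.comp_tendsto hupdate)).congr_deriv ?_
  ring

/-- On each open orthant (x_j ≠ 0 for all j), V is differentiable with
∂V/∂x_i = −(−x_i + g·Σ_j F(ω_ij)·sgn(x_j) + A·I_i): the Hopfield network with step
activation is the gradient system dx_i/dt = −∂V/∂x_i there. -/
theorem hopfield_step_activation_gradient_system (N : ℕ) (hN : 1 ≤ N) (lam g A : ℝ)
    (hlam : 0 < lam) (hg : 0 < g) (ω : Fin N → Fin N → ℝ) (I : Fin N → ℝ) :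
    ∀ x : Fin N → ℝ, (∀ j, x j ≠ 0) →
      DifferentiableAt ℝ (V N lam g A ω I) x ∧
      ∀ i, HasDerivAt (fun s => V N lam g A ω I (Function.update x i s))
        (-(-x i + g * ∑ j, F lam (ω i j) * Real.sign (x j) + A * I i)) (x i) :=
  hopfield_step_activation_gradient_system_general N lam g A ω I
end
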